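/- Let $l, w, g$ be integers and let $d, r_0, \chi_0$ be positive integers with $\gcd(r_0,\chi_0)=1$. Set $r = d r_0$, $\chi = d\chi_0$, $e = 1 + l r_0^2$ and $g^{\mathrm{sp}} = 1 + (g-1)r + \tfrac{rl(r-1)}{2}$. If the tuple $(r, \chi, w+1-g^{\mathrm{sp}})$ is primitive, i.e. $\gcd(r, \chi, w+1-g^{\mathrm{sp}}) = 1$, then the only tuple $(d_1,\dots,d_k)$ of positive integers with $d_1+\cdots+d_k = d$ such that for every $i$ the rational number $\tfrac{e-1}{2} d_i\big(\sum_{j<i} d_j - \sum_{j>i} d_j\big) + \tfrac{w d_i}{d}$ is an integer, is the one-part tuple with $k = 1$ and $d_1 = d$. -/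

import Mathlib

/-!
Since `e - 1 = l * r0 ^ 2` and `2 * w = 2 * m + 2 * (g - 1) * r + r * l * (r - 1)` with
`m = w + 1 - gsp`, the `i`-th integrality quantity differs from `m * dᵢ / d` by an integer: after
substituting `∑_{j<i} dⱼ = d - dᵢ - ∑_{j>i} dⱼ`, the only non-integral term left is
`l * (r0 dᵢ) * (r0 dᵢ + 1) / 2`. So the condition reads `d ∣ m * dᵢ` for every `i`.
Primitivity makes `d` coprime to `m`, hence `d ∣ dᵢ`, and positive parts summing to `d` force
the single part `d`.
-/

open Finset

lemma Finset.sum_filter_lt_add_add_sum_filter_gt {α M : Type*} [LinearOrder α] [Fintype α]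
    [LocallyFiniteOrderTop α] [AddCommMonoid M] (f : α → M) (i : α) :
    ∑ j with j < i, f j + (f i + ∑ j with i < j, f j) = ∑ j, f j := by
  rw [← sum_filter_add_sum_filter_not univ (· < i) f]
  simp only [not_lt]
  rw [filter_lt_eq_Ioi, filter_le_eq_Ici, add_sum_Ioi_eq_sum_Ici]

lemma Int.isCoprime_of_dvd_of_gcd_gcd_eq_one {a b c x : ℤ} (ha : x ∣ a) (hb : x ∣ b)
    (h : Int.gcd a (Int.gcd b c) = 1) : IsCoprime x c := by
  rw [← Int.gcd_assoc, ← Int.isCoprime_iff_gcd_eq_one] at h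
  exact h.of_isCoprime_of_dvd_left (Int.dvd_coe_gcd ha hb)

lemma exists_intCast_eq_div_iff_dvd {a d : ℤ} (hd : d ≠ 0) :
    (∃ n : ℤ, (a / d : ℚ) = n) ↔ d ∣ a := by
  refine ⟨fun ⟨n, hn⟩ => ⟨n, ?_⟩, fun ⟨n, hn⟩ => ⟨n, ?_⟩⟩
  · rw [div_eq_iff (by exact_mod_cast hd), mul_comm] at hn
    exact_mod_cast hn
  · rw [hn]; push_cast; field_simp

lemma exists_intCast_eq_add_intCast_iff {q : ℚ} (t : ℤ) :
    (∃ n : ℤ, t + q = n) ↔ ∃ n : ℤ, q = n :=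
  ⟨fun ⟨n, hn⟩ => ⟨n - t, by push_cast; linarith⟩,
    fun ⟨n, hn⟩ => ⟨t + n, by push_cast; rw [hn]⟩⟩

-- `A` and `B` are the sums of the parts to the left and to the right of the part `Di` of `d`.
lemma exists_int_eq_add_div (l w g d r0 e gsp r Di A B : ℤ) (hd : d ≠ 0)
    (hr : r = d * r0) (he : e = 1 + l * r0 ^ 2)
    (hgsp : 2 * gsp = 2 + 2 * (g - 1) * r + r * l * (r - 1)) (hAB : A + B = d - Di) :
    ∃ t : ℤ, ((e : ℚ) - 1) / 2 * Di * (A - B) + w * Di / d =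
      t + ((w + 1 - gsp) * Di : ℤ) / d := by
  obtain ⟨s, hs⟩ := Int.even_mul_succ_self (r0 * Di)
  refine ⟨(g - 1) * r0 * Di + l * r0 * Di * (d * r0 - r0 * B) - l * s, ?_⟩
  have hA : (A : ℚ) = d - Di - B := by exact_mod_cast (by linarith : A = d - Di - B)
  have hs' : (r0 * Di * (r0 * Di + 1) : ℚ) = 2 * s := by
    exact_mod_cast (by linarith : r0 * Di * (r0 * Di + 1) = 2 * s)
  have hgsp' : (2 * gsp : ℚ) = 2 + 2 * (g - 1) * r + r * l * (r - 1) := by exact_mod_cast hgsp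
  subst hr he
  push_cast at hgsp' ⊢
  rw [hA]
  field_simp
  linear_combination (-(d : ℚ) * l) * hs' + (Di : ℚ) * hgsp'

lemma integrality_iff_dvd (l w g d r0 e gsp r Di A B : ℤ) (hd : d ≠ 0)
    (hr : r = d * r0) (he : e = 1 + l * r0 ^ 2)
    (hgsp : 2 * gsp = 2 + 2 * (g - 1) * r + r * l * (r - 1)) (hAB : A + B = d - Di) :
    (∃ n : ℤ, ((e : ℚ) - 1) / 2 * Di * (A - B) + w * Di / d = n) ↔
      d ∣ (w + 1 - gsp) * Di := by
  obtain ⟨t, ht⟩ := exists_int_eq_add_div l w g d r0 e gsp r Di A B hd hr he hgsp hAB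
  rw [ht, exists_intCast_eq_add_intCast_iff, exists_intCast_eq_div_iff_dvd hd]

lemma Fin.card_eq_one_of_sum_eq_of_forall_dvd {k : ℕ} {D : Fin k → ℤ} {d : ℤ} (hd : 0 < d)
    (hpos : ∀ i, 0 < D i) (hsum : ∑ i, D i = d) (hdvd : ∀ i, d ∣ D i) :
    k = 1 ∧ ∀ i, D i = d := by
  have hD : ∀ i, D i = d := fun i =>
    le_antisymm (hsum ▸ single_le_sum (fun j _ => (hpos j).le) (mem_univ i))
      (Int.le_of_dvd (hpos i) (hdvd i))
  refine ⟨?_, hD⟩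
  have hk : (k : ℤ) * d = 1 * d := by simpa [hD] using hsum
  exact_mod_cast mul_right_cancel₀ hd.ne' hk

theorem stmt_1_general (l w g : ℤ) (d r0 χ0 : ℤ) (hd : 0 < d)
    (r χ e gsp : ℤ) (hr : r = d * r0) (hχ : χ = d * χ0) (he : e = 1 + l * r0 ^ 2)
    (hgsp : 2 * gsp = 2 + 2 * (g - 1) * r + r * l * (r - 1))
    (hprim : Int.gcd r (Int.gcd χ (w + 1 - gsp)) = 1) :
    ∀ (k : ℕ) (D : Fin k → ℤ), (∀ i, 0 < D i) → (∑ i, D i) = d →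
      ((∀ i : Fin k, ∃ n : ℤ,
          ((e : ℚ) - 1) / 2 * (D i : ℚ) *
              ((∑ j ∈ Finset.univ.filter (fun j => j < i), (D j : ℚ)) -
                (∑ j ∈ Finset.univ.filter (fun j => i < j), (D j : ℚ))) +
            (w : ℚ) * (D i : ℚ) / (d : ℚ) = (n : ℚ))
        ↔ (k = 1 ∧ ∀ i : Fin k, D i = d)) := by
  intro k D hpos hsum
  have hcop : IsCoprime d (w + 1 - gsp) :=
    Int.isCoprime_of_dvd_of_gcd_gcd_eq_one ⟨r0, hr⟩ ⟨χ0, hχ⟩ hprim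
  have hcond (i : Fin k) := integrality_iff_dvd l w g d r0 e gsp r (D i)
    (∑ j with j < i, D j) (∑ j with i < j, D j) hd.ne' hr he hgsp
    (by rw [← hsum, ← sum_filter_lt_add_add_sum_filter_gt D i]; abel)
  simp only [← Int.cast_sum] at hcond ⊢
  refine ⟨fun h => ?_, fun ⟨_, hD⟩ i => ?_⟩
  · exact Fin.card_eq_one_of_sum_eq_of_forall_dvd hd hpos hsum
      fun i => hcop.dvd_of_dvd_mul_left ((hcond i).1 (h i))
  · exact (hcond i).2 (by rw [hD i]; exact dvd_mul_left d _)

/-- If the tuple `(r, χ, w + 1 - gˢᵖ)` is primitive, then the only tuple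
`(d₁, …, d_k)` of positive integers summing to `d` satisfying the integrality condition
defining `S^d_w` is the one-part tuple `(d)`. -/
theorem stmt_1 (l w g : ℤ) (d r0 χ0 : ℤ) (hd : 0 < d) (hr0 : 0 < r0) (hχ0 : 0 < χ0)
    (hcop : Int.gcd r0 χ0 = 1)
    (r χ e gsp : ℤ) (hr : r = d * r0) (hχ : χ = d * χ0) (he : e = 1 + l * r0 ^ 2)
    (hgsp : 2 * gsp = 2 + 2 * (g - 1) * r + r * l * (r - 1))
    (hprim : Int.gcd r (Int.gcd χ (w + 1 - gsp)) = 1) :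
    ∀ (k : ℕ) (D : Fin k → ℤ), (∀ i, 0 < D i) → (∑ i, D i) = d →
      ((∀ i : Fin k, ∃ n : ℤ,
          ((e : ℚ) - 1) / 2 * (D i : ℚ) *
              ((∑ j ∈ Finset.univ.filter (fun j => j < i), (D j : ℚ)) -
                (∑ j ∈ Finset.univ.filter (fun j => i < j), (D j : ℚ))) +
            (w : ℚ) * (D i : ℚ) / (d : ℚ) = (n : ℚ))
        ↔ (k = 1 ∧ ∀ i : Fin k, D i = d)) :=
  stmt_1_general l w g d r0 χ0 hd r χ e gsp hr hχ he hgsp hprim
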